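/- Let G = (V, E; w) be a graph with strictly positive edge weights whose matching game Γ_G admits a PMAS. Suppose vertices 1, 2, 3, 4 are distinct, the induced subgraph on {1,2,3} has edge set exactly {12, 23}, and the induced subgraph on {2,3,4} has edge set exactly {23, 34}. Then w_{23} ≥ w_{12} + w_{34}. -/

import Mathlib

/-!
Put `T₁ = {1,2,3}` and `T₂ = {2,3,4}`. Monotonicity of the PMAS gives
`x_{T₁}(1) + x_{T₁}(2) ≥ γ{1,2}`, `x_{T₂}(3) + x_{T₂}(4) ≥ γ{3,4}`, `x_{T₁}(3) ≥ x_{23}(3)` and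
`x_{T₂}(2) ≥ x_{23}(2)`, so efficiency yields
`w₁₂ + w₂₃ + w₃₄ ≤ γ{1,2} + γ{2,3} + γ{3,4} ≤ γ(T₁) + γ(T₂)`.
Each `T_k` induces a path on three vertices, whose matchings have at most one edge, so
`γ(T₁) ≤ max w₁₂ w₂₃` and `γ(T₂) ≤ max w₂₃ w₃₄`; as all weights are positive, both maxima
must be `w₂₃`.
-/

open Finset

/-- `M` is a matching of the induced subgraph `G[S]`, given as a finite set of
(ordered representatives of) edges with endpoints in `S`, pairwise vertex-disjoint. -/
def IsMatchingIn {V : Type*} (G : SimpleGraph V) (S : Finset V)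
    (M : Finset (V × V)) : Prop :=
  (∀ p ∈ M, G.Adj p.1 p.2 ∧ p.1 ∈ S ∧ p.2 ∈ S) ∧
  (∀ p ∈ M, ∀ q ∈ M, p ≠ q →
    p.1 ≠ q.1 ∧ p.1 ≠ q.2 ∧ p.2 ≠ q.1 ∧ p.2 ≠ q.2)

/-- `r` is the maximum total weight of a matching in the induced subgraph `G[S]`. -/
def IsMaxMatchingWeight {V : Type*} (G : SimpleGraph V)
    (w : V → V → ℝ) (S : Finset V) (r : ℝ) : Prop :=
  (∃ M : Finset (V × V), IsMatchingIn G S M ∧ ∑ p ∈ M, w p.1 p.2 = r) ∧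
  (∀ M : Finset (V × V), IsMatchingIn G S M → ∑ p ∈ M, w p.1 p.2 ≤ r)

/-- A population monotonic allocation scheme (PMAS): `x S i` is the payoff of player `i`
in coalition `S`.  Efficiency holds for every nonempty coalition, and every player's
payoff is monotone under coalition inclusion. -/
def IsPMAS {N : Type*} [DecidableEq N] (γ : Finset N → ℝ)
    (x : Finset N → N → ℝ) : Prop :=
  (∀ S : Finset N, S.Nonempty → ∑ i ∈ S, x S i = γ S) ∧
  (∀ S T : Finset N, S ⊆ T → ∀ i ∈ S, x S i ≤ x T i)

section Matching

variable {V : Type*} {G : SimpleGraph V} {w : V → V → ℝ} {S : Finset V} {r : ℝ}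

lemma isMatchingIn_singleton {a b : V} (hab : G.Adj a b) (ha : a ∈ S) (hb : b ∈ S) :
    IsMatchingIn G S {(a, b)} :=
  ⟨by simp [hab, ha, hb], by simp⟩

lemma IsMaxMatchingWeight.weight_le {a b : V} (h : IsMaxMatchingWeight G w S r)
    (hab : G.Adj a b) (ha : a ∈ S) (hb : b ∈ S) : w a b ≤ r := by
  simpa using h.2 _ (isMatchingIn_singleton hab ha hb)

lemma IsMatchingIn.card_le_one_of_forall_incident {M : Finset (V × V)}
    (hM : IsMatchingIn G S M) (b : V) (hb : ∀ p ∈ M, p.1 = b ∨ p.2 = b) : M.card ≤ 1 := by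
  refine card_le_one.2 fun p hp q hq => by_contra fun hne => ?_
  have hdisjoint := hM.2 p hp q hq hne
  rcases hb p hp with hp | hp <;> rcases hb q hq with hq | hq <;> simp_all

variable [DecidableEq V]

lemma IsMatchingIn.mem_of_path {a b c : V} {M : Finset (V × V)}
    (hM : IsMatchingIn G {a, b, c} M) (hac : ¬ G.Adj a c) :
    ∀ p ∈ M, p = (a, b) ∨ p = (b, a) ∨ p = (b, c) ∨ p = (c, b) := by
  rintro ⟨u, v⟩ hp
  obtain ⟨hadj, hu, hv⟩ := hM.1 _ hp
  simp only [mem_insert, mem_singleton] at hu hv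
  rcases hu with rfl | rfl | rfl <;> rcases hv with rfl | rfl | rfl <;>
    simp_all [G.adj_comm]

lemma IsMaxMatchingWeight.le_max_of_path (hsym : ∀ a b, w a b = w b a) {a b c : V}
    (h : IsMaxMatchingWeight G w {a, b, c} r) (hab : 0 ≤ w a b) (hac : ¬ G.Adj a c) :
    r ≤ max (w a b) (w b c) := by
  obtain ⟨M, hM, rfl⟩ := h.1
  have hedges := hM.mem_of_path hac
  rcases M.eq_empty_or_nonempty with rfl | ⟨p, hp⟩
  · simpa using le_max_of_le_left hab
  have hincident : ∀ q ∈ M, q.1 = b ∨ q.2 = b := fun q hq => by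
    rcases hedges q hq with rfl | rfl | rfl | rfl <;> simp
  have hMp : M = {p} :=
    eq_singleton_iff_unique_mem.2 ⟨hp, fun q hq =>
      card_le_one.1 (hM.card_le_one_of_forall_incident b hincident) q hq p hp⟩
  subst hMp
  rcases hedges p hp with rfl | rfl | rfl | rfl <;> simp [hsym b a, hsym c b]

end Matching

section PMAS

variable {N : Type*} [DecidableEq N] {γ : Finset N → ℝ} {x : Finset N → N → ℝ}

lemma IsPMAS.le_sum_of_subset (hx : IsPMAS γ x) {S T : Finset N} (hS : S.Nonempty)
    (hST : S ⊆ T) : γ S ≤ ∑ i ∈ S, x T i :=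
  hx.1 S hS ▸ sum_le_sum fun i hi => hx.2 S T hST i hi

lemma IsPMAS.sum_pair (hx : IsPMAS γ x) {a b : N} (hab : a ≠ b) :
    x {a, b} a + x {a, b} b = γ {a, b} := by
  rw [← hx.1 _ (insert_nonempty _ _), Finset.sum_pair hab]

lemma IsPMAS.sum_triple (hx : IsPMAS γ x) {a b c : N} (hab : a ≠ b) (hac : a ≠ c)
    (hbc : b ≠ c) : x {a, b, c} a + x {a, b, c} b + x {a, b, c} c = γ {a, b, c} := by
  rw [← hx.1 _ (insert_nonempty _ _), sum_insert (by simp [hab, hac]), Finset.sum_pair hbc,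
    add_assoc]

lemma IsPMAS.pairs_le_triples (hx : IsPMAS γ x) {a b c d : N} (hab : a ≠ b) (hac : a ≠ c)
    (hbc : b ≠ c) (hbd : b ≠ d) (hcd : c ≠ d) :
    γ {a, b} + γ {b, c} + γ {c, d} ≤ γ {a, b, c} + γ {b, c, d} := by
  have hab_le : γ {a, b} ≤ x {a, b, c} a + x {a, b, c} b := by
    simpa [Finset.sum_pair hab] using
      hx.le_sum_of_subset (insert_nonempty _ _) (by grind : ({a, b} : Finset N) ⊆ {a, b, c})
  have hcd_le : γ {c, d} ≤ x {b, c, d} c + x {b, c, d} d := by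
    simpa [Finset.sum_pair hcd] using
      hx.le_sum_of_subset (insert_nonempty _ _) (by grind : ({c, d} : Finset N) ⊆ {b, c, d})
  have hb_le : x {b, c} b ≤ x {b, c, d} b := hx.2 _ _ (by grind) b (by simp)
  have hc_le : x {b, c} c ≤ x {a, b, c} c := hx.2 _ _ (by grind) c (by simp)
  linarith [hx.sum_pair hbc, hx.sum_triple hab hac hbc, hx.sum_triple hbc hbd hcd]

end PMAS

lemma add_le_of_add_add_le_max_add_max {a b c : ℝ} (ha : 0 < a) (hb : 0 < b) (hc : 0 < c)
    (h : a + b + c ≤ max a b + max b c) : a + c ≤ b := by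
  rcases max_cases a b with ⟨h₁, _⟩ | ⟨h₁, _⟩ <;> rcases max_cases b c with ⟨h₂, _⟩ | ⟨h₂, _⟩ <;>
    linarith

theorem matchingGame_two_P3_cover_general {V : Type*} [DecidableEq V]
    (G : SimpleGraph V) (w : V → V → ℝ)
    (hsym : ∀ a b : V, w a b = w b a)
    (hpos : ∀ a b : V, G.Adj a b → 0 < w a b)
    (γ : Finset V → ℝ)
    (hγ : ∀ S : Finset V, IsMaxMatchingWeight G w S (γ S))
    (hpmas : ∃ x : Finset V → V → ℝ, IsPMAS γ x)
    (v1 v2 v3 v4 : V)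
    (hne12 : v1 ≠ v2) (hne13 : v1 ≠ v3)
    (hne23 : v2 ≠ v3) (hne24 : v2 ≠ v4) (hne34 : v3 ≠ v4)
    (h12 : G.Adj v1 v2) (h23 : G.Adj v2 v3) (hn13 : ¬ G.Adj v1 v3)
    (h34 : G.Adj v3 v4) (hn24 : ¬ G.Adj v2 v4) :
    w v2 v3 ≥ w v1 v2 + w v3 v4 := by
  obtain ⟨x, hx⟩ := hpmas
  have hpairs := hx.pairs_le_triples hne12 hne13 hne23 hne24 hne34
  have h123 := (hγ {v1, v2, v3}).le_max_of_path hsym (hpos _ _ h12).le hn13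
  have h234 := (hγ {v2, v3, v4}).le_max_of_path hsym (hpos _ _ h23).le hn24
  have h12_le := (hγ {v1, v2}).weight_le h12 (by simp) (by simp)
  have h23_le := (hγ {v2, v3}).weight_le h23 (by simp) (by simp)
  have h34_le := (hγ {v3, v4}).weight_le h34 (by simp) (by simp)
  exact add_le_of_add_add_le_max_add_max (hpos _ _ h12) (hpos _ _ h23) (hpos _ _ h34)
    (by linarith)

/-- 2P₃-cover (Lemma 3.2 (i)). -/
theorem matchingGame_two_P3_cover {V : Type*} [Fintype V] [DecidableEq V]
    (G : SimpleGraph V) (w : V → V → ℝ)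
    (hsym : ∀ a b : V, w a b = w b a)
    (hpos : ∀ a b : V, G.Adj a b → 0 < w a b)
    (γ : Finset V → ℝ)
    (hγ : ∀ S : Finset V, IsMaxMatchingWeight G w S (γ S))
    (hpmas : ∃ x : Finset V → V → ℝ, IsPMAS γ x)
    (v1 v2 v3 v4 : V)
    (hne12 : v1 ≠ v2) (hne13 : v1 ≠ v3) (hne14 : v1 ≠ v4)
    (hne23 : v2 ≠ v3) (hne24 : v2 ≠ v4) (hne34 : v3 ≠ v4)
    (h12 : G.Adj v1 v2) (h23 : G.Adj v2 v3) (hn13 : ¬ G.Adj v1 v3)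
    (h34 : G.Adj v3 v4) (hn24 : ¬ G.Adj v2 v4) :
    w v2 v3 ≥ w v1 v2 + w v3 v4 :=
  matchingGame_two_P3_cover_general G w hsym hpos γ hγ hpmas v1 v2 v3 v4 hne12 hne13 hne23 hne24
    hne34 h12 h23 hn13 h34 hn24
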